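/- arXiv:2510.01080 — 7 statements merged into one kernel-verified Lean document; each statement's English description precedes it below -/
import Mathlib

section
/- For every n : ℕ and every permutation τ : Equiv.Perm (Fin n) with τ ≠ 1, there exists k : Fin n with k ≠ 0 such that for every monotone x : Fin n → ℝ one has max_{i ≤ k} x (τ i) = max_{i < k} x (τ i); equivalently, writing f for the folding map, f (x ∘ τ) k = f (x ∘ τ) k' where k' is the predecessor of k in Fin n. (This expresses that for τ ≠ id the composite fₙ ∘ ι_τ, restricted to the ordered n-simplex, has two equal consecutive output coordinates identically, i.e. is a degenerate simplex.) -/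
/-- The folding map `f x k = max_{i ≤ k} x i`. -/
noncomputable def fold (n : ℕ) (x : Fin n → ℝ) (k : Fin n) : ℝ :=
  (Finset.Iic k).sup' ⟨k, Finset.mem_Iic.mpr le_rfl⟩ x

theorem Finset.Iio_nonempty_of_val_ne_zero {n : ℕ} (k : Fin n) (hk : k.val ≠ 0) :
    (Finset.Iio k).Nonempty :=
  ⟨⟨0, lt_trans (Nat.pos_of_ne_zero hk) k.isLt⟩,
    Finset.mem_Iio.mpr (by simpa [Fin.lt_def] using Nat.pos_of_ne_zero hk)⟩

/-- For every non-identity permutation `τ` of `Fin n`, there is an index `k ≠ 0`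
such that for all monotone `x : Fin n → ℝ`, the maximum of `x ∘ τ` over `i ≤ k`
equals the maximum over `i < k`; i.e. `fold n (x ∘ τ)` has two equal consecutive
coordinates identically on the ordered simplex, so `fₙ ∘ ι_τ` is degenerate. -/
theorem fold_comp_perm_degenerate (n : ℕ) (τ : Equiv.Perm (Fin n)) (h : τ ≠ 1) :
    ∃ k : Fin n, ∃ hk : k.val ≠ 0, ∀ x : Fin n → ℝ, Monotone x →
      fold n (x ∘ τ) k =
        (Finset.Iio k).sup' (Finset.Iio_nonempty_of_val_ne_zero k hk) (x ∘ τ) := by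
  -- There exist i < j with τ j < τ i, else τ is strictly monotone hence the identity.
  have hdesc : ∃ i j : Fin n, i < j ∧ τ j < τ i := by
    by_contra hc
    push_neg at hc
    have hmono : StrictMono (⇑τ) := by
      intro a b hab
      exact lt_of_le_of_ne (hc a b hab) (fun he : τ a = τ b => (ne_of_lt hab) (τ.injective he))
    apply h
    have inst : WellFoundedLT (Fin n) := inferInstance
    have : ⇑τ = id :=
      (@StrictMono.range_inj (Fin n) (Fin n) _ _ inst _ id hmono strictMono_id).1 (by
        simp [Set.range_eq_univ.mpr τ.surjective, Set.range_id])
    ext a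
    simp [show τ a = a from congrFun this a]
  obtain ⟨i, j, hij, hτ⟩ := hdesc
  have hj0 : j.val ≠ 0 := by
    intro hz
    exact absurd hij (by simp [Fin.lt_def, hz])
  refine ⟨j, hj0, fun x hx => ?_⟩
  have hne : (Finset.Iio j).Nonempty := Finset.Iio_nonempty_of_val_ne_zero j hj0
  have hsplit : Finset.Iic j = insert j (Finset.Iio j) := by
    ext a; simp [Finset.mem_Iic, Finset.mem_Iio, le_iff_lt_or_eq, or_comm, eq_comm]
  have hne' : (Finset.Iic j).Nonempty := ⟨j, Finset.mem_Iic.mpr le_rfl⟩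
  show (Finset.Iic j).sup' hne' (x ∘ τ) = _
  rw [Finset.sup'_congr _ hsplit (fun _ _ => rfl), Finset.sup'_insert hne]
  have hle : (x ∘ τ) j ≤ (Finset.Iio j).sup' hne (x ∘ τ) := by
    calc (x ∘ τ) j ≤ (x ∘ τ) i := hx hτ.le
    _ ≤ _ := Finset.le_sup' _ (Finset.mem_Iio.mpr hij)
  exact sup_eq_right.mpr hle
end

section
/- Fix n : ℕ, let x : Fin (n+1) → ℝ satisfy x i ≥ 0 for all i, and let k : Fin (n+1) with k ≠ 0 and x k = 0. Let x̂ : Fin n → ℝ be obtained from x by deleting the k-th coordinate (x̂ = x ∘ Fin.succAbove k). Then, writing f_{n+1} and f_n for the folding maps in the respective dimensions: for every j < k one has f_{n+1} x j = f_n x̂ j' (where j' is j regarded as an element of Fin n), and for every j ≥ k one has f_{n+1} x j = f_n x̂ j'' (where j'' is the predecessor of j regarded in Fin n). In particular f_{n+1} x k = f_{n+1} x k⁻, where k⁻ is the predecessor of k. (This expresses that the cubical face of the folding map obtained by setting the k-th coordinate to 0 corresponds to a simplicial face, namely the folding map in one dimension lower precomposed with coordinate deletion.) -/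
lemma fold_aux1 (n : ℕ) (x : Fin (n + 1) → ℝ) (k : Fin (n + 1))
    (j : Fin (n + 1)) (hjk : j < k) (hj : j.val < n) :
    fold (n + 1) x j = fold n (x ∘ k.succAbove) ⟨j.val, hj⟩ := by
  apply le_antisymm
  · apply Finset.sup'_le
    intro i hi
    rw [Finset.mem_Iic] at hi
    have hik : i.val < k.val := lt_of_le_of_lt hi hjk
    have hin : i.val < n := lt_of_lt_of_le hik (Nat.lt_succ_iff.mp k.isLt)
    have hx : x i = (x ∘ k.succAbove) ⟨i.val, hin⟩ := by
      simp only [Function.comp_apply]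
      congr 1
      rw [Fin.succAbove_of_castSucc_lt]
      · exact Fin.ext rfl
      · exact hik
    rw [hx]
    exact Finset.le_sup' _ (Finset.mem_Iic.mpr (by exact hi))
  · apply Finset.sup'_le
    intro i hi
    rw [Finset.mem_Iic] at hi
    have hi' : (i : ℕ) ≤ j.val := hi
    have hik : (i : ℕ) < k.val := lt_of_le_of_lt hi' hjk
    have hx : (x ∘ k.succAbove) i = x (Fin.castSucc i) := by
      simp only [Function.comp_apply]
      congr 1
      exact Fin.succAbove_of_castSucc_lt _ _ hik
    rw [hx]
    exact Finset.le_sup' _ (Finset.mem_Iic.mpr (by exact hi'))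

lemma fold_aux2 (n : ℕ) (x : Fin (n + 1) → ℝ)
    (hx : ∀ i, 0 ≤ x i) (k : Fin (n + 1)) (hxk : x k = 0)
    (j : Fin (n + 1)) (hkj : k ≤ j) (hj : j ≠ 0) :
    fold (n + 1) x j = fold n (x ∘ k.succAbove) (j.pred hj) := by
  apply le_antisymm
  · apply Finset.sup'_le
    intro i hi
    rw [Finset.mem_Iic] at hi
    have hi' : (i : ℕ) ≤ j.val := hi
    by_cases hik : i = k
    · rw [hik, hxk]
      calc (0:ℝ) ≤ (x ∘ k.succAbove) (j.pred hj) := hx _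
        _ ≤ _ := Finset.le_sup' _ (Finset.mem_Iic.mpr le_rfl)
    · obtain ⟨i', hi'eq⟩ := Fin.exists_succAbove_eq hik
      rw [← hi'eq]
      have hle : i' ≤ j.pred hj := by
        rw [Fin.le_def, Fin.coe_pred]
        rcases lt_or_ge (Fin.castSucc i') k with h | h
        · have := Fin.succAbove_of_castSucc_lt _ _ h
          rw [this] at hi'eq
          have h1 : (i' : ℕ) = i.val := by rw [← hi'eq]; rfl
          have h2 : (i : ℕ) < k.val := by rw [← h1]; exact h
          have h3 : k.val ≤ j.val := hkj
          omega
        · have := Fin.succAbove_of_le_castSucc _ _ h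
          rw [this] at hi'eq
          have h1 : (i' : ℕ) + 1 = i.val := by rw [← hi'eq]; rfl
          omega
      exact Finset.le_sup' (x ∘ k.succAbove) (Finset.mem_Iic.mpr hle)
  · apply Finset.sup'_le
    intro i hi
    rw [Finset.mem_Iic] at hi
    have hi' : (i : ℕ) ≤ (j.pred hj).val := hi
    have hipred : (i : ℕ) ≤ j.val - 1 := by rw [Fin.coe_pred] at hi'; exact hi'
    have hj0 : (0:ℕ) < j.val := by
      rcases Nat.eq_zero_or_pos j.val with h | h
      · exact absurd (Fin.ext h) hj
      · exact h
    have hmem : k.succAbove i ≤ j := by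
      rw [Fin.le_def]
      rcases lt_or_ge (Fin.castSucc i) k with h | h
      · rw [Fin.succAbove_of_castSucc_lt _ _ h]
        have : (i : ℕ) < k.val := h
        have : k.val ≤ j.val := hkj
        simp only [Fin.coe_castSucc]
        omega
      · rw [Fin.succAbove_of_le_castSucc _ _ h]
        simp only [Fin.val_succ]
        omega

    exact Finset.le_sup' x (Finset.mem_Iic.mpr hmem)

/-- Setting the `k`-th coordinate of a nonnegative tuple to `0` (for `k ≠ 0`) turns
the folding map in dimension `n+1` into the folding map in dimension `n` precomposed
with deletion of the `k`-th coordinate: for `j < k` the value is `fold n x̂` at `j`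
(regarded in `Fin n`), and for `j ≥ k` it is `fold n x̂` at the predecessor of `j`
(regarded in `Fin n`). In particular `fold (n+1) x k = fold (n+1) x k⁻`. -/
theorem fold_face_zero_eq_simplicial_face (n : ℕ) (x : Fin (n + 1) → ℝ)
    (hx : ∀ i, 0 ≤ x i) (k : Fin (n + 1)) (hk : k ≠ 0) (hxk : x k = 0) :
    (∀ j : Fin (n + 1), ∀ hjk : j < k,
      fold (n + 1) x j =
        fold n (x ∘ k.succAbove)
          ⟨j.val, lt_of_lt_of_le hjk (Nat.lt_succ_iff.mp k.isLt)⟩) ∧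
    (∀ j : Fin (n + 1), ∀ hkj : k ≤ j,
      fold (n + 1) x j =
        fold n (x ∘ k.succAbove)
          (j.pred (Fin.pos_iff_ne_zero.mp (lt_of_lt_of_le (Fin.pos_of_ne_zero hk) hkj)))) ∧
    fold (n + 1) x k = fold (n + 1) x ((k.pred hk).castSucc) := by
  refine ⟨fun j hjk => fold_aux1 n x k j hjk _, fun j hkj => fold_aux2 n x hx k hxk j hkj _, ?_⟩
  have h1 := fold_aux2 n x hx k hxk k le_rfl hk
  have h2 := fold_aux1 n x k ((k.pred hk).castSucc) (by
      rw [Fin.lt_def, Fin.coe_castSucc, Fin.coe_pred]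
      have := Fin.pos_of_ne_zero hk
      omega) (by
      have h0 : (0:ℕ) < k.val := by
        rcases Nat.eq_zero_or_pos k.val with h | h
        · exact absurd (Fin.ext h) hk
        · exact h
      have := k.isLt
      simp only [Fin.coe_castSucc, Fin.coe_pred]
      omega)
  rw [h1, h2]
  congr 1
end

section
/- Let X be a topological space, a b c : X, and γ : Path a b. Then the maps L : Path b c → Path a c, L δ = γ.trans δ, and L' : Path a c → Path b c, L' δ = γ.symm.trans δ, are continuous; the composite L' ∘ L is homotopic, as a continuous map, to the identity of Path b c; and L ∘ L' is homotopic to the identity of Path a c. In particular, there is a homotopy equivalence (ContinuousMap.HomotopyEquiv) between the spaces Path b c and Path a c whose forward map is δ ↦ γ.trans δ. -/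
open Set unitInterval

namespace PathSpaceHE

variable {X : Type*} [TopologicalSpace X]

lemma symm_extend {x y : X} (p : Path x y) (u : ℝ) :
    p.symm.extend u = p.extend (1 - u) := by
  rcases lt_or_ge u 0 with h | h
  · rw [Path.extend_of_le_zero _ h.le, Path.extend_of_one_le _ (by linarith)]
  rcases le_or_gt u 1 with h1 | h1
  · rw [Path.extend_apply _ ⟨h, h1⟩, Path.extend_apply _ ⟨by linarith, by linarith⟩]
    show p (σ ⟨u, h, h1⟩) = _
    congr 1
  · rw [Path.extend_of_one_le _ h1.le, Path.extend_of_le_zero _ (by linarith)]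

lemma trans_coe {x y z : X} (p : Path x y) (q : Path y z) (t : I) :
    (p.trans q) t = if (t : ℝ) ≤ 1 / 2 then p.extend (2 * t) else q.extend (2 * t - 1) := rfl

lemma trans_extend {x y z : X} (p : Path x y) (q : Path y z) (u : ℝ) :
    (p.trans q).extend u = if u ≤ 1 / 2 then p.extend (2 * u) else q.extend (2 * u - 1) := by
  rcases le_or_gt u 0 with h | h
  · rw [Path.extend_of_le_zero _ h, if_pos (by linarith), Path.extend_of_le_zero _ (by linarith)]
  rcases le_or_gt 1 u with h1 | h1
  · rw [Path.extend_of_one_le _ h1, if_neg (show ¬ u ≤ 1/2 by intro hc; linarith),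
      Path.extend_of_one_le _ (by linarith)]
  · rw [Path.extend_apply _ ⟨h.le, h1.le⟩, trans_coe]

/-- The underlying real-variable formula of the homotopy from
`δ ↦ γ.symm.trans (γ.trans δ)` to the identity. -/
noncomputable def Hfun {a b c : X} (γ : Path a b) (δ : Path b c) (s t : ℝ) : X :=
  if t ≤ (1 - s) / 2 then γ.extend (1 - 2 * t)
  else if t ≤ 3 * (1 - s) / 4 then γ.extend (4 * t - 2 + 3 * s)
  else δ.extend ((4 * t - 3 * (1 - s)) / (1 + 3 * s))

lemma Hfun_source {a b c : X} (γ : Path a b) (δ : Path b c) {s : ℝ}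
    (hs1 : s ≤ 1) : Hfun γ δ s 0 = b := by
  unfold Hfun
  rw [if_pos (by linarith : (0:ℝ) ≤ (1 - s) / 2),
    show 1 - 2 * (0:ℝ) = 1 by ring, Path.extend_one]

lemma Hfun_target {a b c : X} (γ : Path a b) (δ : Path b c) {s : ℝ}
    (hs0 : 0 ≤ s) : Hfun γ δ s 1 = c := by
  unfold Hfun
  rw [if_neg (show ¬ (1:ℝ) ≤ (1 - s) / 2 by intro hc; linarith),
    if_neg (show ¬ (1:ℝ) ≤ 3 * (1 - s) / 4 by intro hc; linarith),
    show (4 * (1:ℝ) - 3 * (1 - s)) / (1 + 3 * s) = 1 by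
      rw [show 4 * (1:ℝ) - 3 * (1 - s) = 1 + 3 * s by ring]
      exact div_self (by linarith),
    Path.extend_one]

lemma contH {a b c : X} (γ : Path a b) :
    Continuous (fun q : (I × Path b c) × I =>
      Hfun γ q.1.2 (q.1.1 : ℝ) (q.2 : ℝ)) := by
  unfold Hfun
  have hδ : Continuous ↿(fun q : (I × Path b c) × I => q.1.2) :=
    (continuous_fst.fst.snd).eval continuous_snd
  refine Continuous.if_le ?_ ?_ (by fun_prop) (by fun_prop) ?_
  · exact γ.continuous_extend.comp (by fun_prop)
  · refine Continuous.if_le ?_ ?_ (by fun_prop) (by fun_prop) ?_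
    · exact γ.continuous_extend.comp (by fun_prop)
    · refine Continuous.pathExtend hδ ?_
      refine Continuous.div (by fun_prop) (by fun_prop) fun q => ?_
      have := (q.1.1).2.1
      nlinarith
    · intro q h
      rw [h, show 4 * (3 * (1 - (q.1.1 : ℝ)) / 4) - 2 + 3 * q.1.1 = 1 by ring,
        show 4 * (3 * (1 - (q.1.1 : ℝ)) / 4) - 3 * (1 - q.1.1) = 0 by ring, zero_div,
        Path.extend_one, Path.extend_zero]
  · intro q h
    have hs1 : (q.1.1 : ℝ) ≤ 1 := (q.1.1).2.2
    rw [h, if_pos (by linarith),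
      show 1 - 2 * ((1 - (q.1.1 : ℝ)) / 2) = (q.1.1 : ℝ) by ring,
      show 4 * ((1 - (q.1.1 : ℝ)) / 2) - 2 + 3 * q.1.1 = (q.1.1 : ℝ) by ring]

/-- The homotopy, as a family of paths. -/
noncomputable def Fmap {a b c : X} (γ : Path a b) (p : I × Path b c) : Path b c where
  toFun := fun t => Hfun γ p.2 (p.1 : ℝ) (t : ℝ)
  continuous_toFun := (contH γ).comp (Continuous.prodMk continuous_const continuous_id)
  source' := by
    show Hfun γ p.2 (p.1 : ℝ) (((0:I)) : ℝ) = b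
    rw [show (((0:I)) : ℝ) = 0 from rfl]
    exact Hfun_source γ p.2 (p.1).2.2
  target' := by
    show Hfun γ p.2 (p.1 : ℝ) (((1:I)) : ℝ) = c
    rw [show (((1:I)) : ℝ) = 1 from rfl]
    exact Hfun_target γ p.2 (p.1).2.1

lemma homot {a b c : X} (γ : Path a b) (f : C(Path b c, Path b c))
    (hf : ∀ δ, f δ = γ.symm.trans (γ.trans δ)) :
    f.Homotopic (ContinuousMap.id (Path b c)) := by
  refine ⟨⟨⟨fun p => Fmap γ p, Path.continuous_uncurry_iff.mp (contH γ)⟩, ?_, ?_⟩⟩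
  · intro δ
    rw [hf]
    ext t
    have ht0 : (0:ℝ) ≤ t := t.2.1
    have ht1 : (t:ℝ) ≤ 1 := t.2.2
    show Hfun γ δ (((0:I)) : ℝ) (t : ℝ) = (γ.symm.trans (γ.trans δ)) t
    rw [show (((0:I)) : ℝ) = 0 from rfl, ← Path.extend_extends' (γ.symm.trans (γ.trans δ)) t,
      trans_extend, symm_extend, trans_extend]
    unfold Hfun
    split_ifs <;> first
      | rfl
      | (exfalso; linarith)
      | (congr 1; ring1)
  · intro δ
    ext t
    have ht0 : (0:ℝ) ≤ t := t.2.1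
    have ht1 : (t:ℝ) ≤ 1 := t.2.2
    show Hfun γ δ (((1:I)) : ℝ) (t : ℝ) = δ t
    rw [show (((1:I)) : ℝ) = 1 from rfl, ← Path.extend_extends' δ t]
    unfold Hfun
    rcases le_or_gt (t : ℝ) 0 with h | h
    · have htz : (t : ℝ) = 0 := le_antisymm h ht0
      rw [if_pos (show (t:ℝ) ≤ (1 - 1)/2 by rw [htz]; norm_num), htz,
        show 1 - 2 * (0:ℝ) = 1 by ring, Path.extend_one, Path.extend_zero]
    · rw [if_neg (show ¬ (t:ℝ) ≤ (1 - 1)/2 by intro hc; linarith),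
        if_neg (show ¬ (t:ℝ) ≤ 3 * (1 - 1)/4 by intro hc; linarith)]
      congr 1
      field_simp
      ring


lemma cont_trans {a b c : X} (γ : Path a b) :
    Continuous fun δ : Path b c => γ.trans δ := by
  apply Path.continuous_uncurry_iff.mp
  exact Path.trans_continuous_family (fun _ : Path b c => γ)
    (γ.continuous.comp continuous_snd) (fun δ => δ)
    (continuous_fst.eval continuous_snd)

end PathSpaceHE

open PathSpaceHE in
/-- Concatenation with a fixed path `γ : Path a b` gives a continuous map
`L : Path b c → Path a c`, with continuous homotopy inverse
`L' : δ ↦ γ.symm.trans δ`; both composites are homotopic to the identity, and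
there is a homotopy equivalence `Path b c ≃ Path a c` whose forward map is
`δ ↦ γ.trans δ`. -/
theorem path_space_homotopy_equiv_of_path {X : Type*} [TopologicalSpace X]
    (a b c : X) (γ : Path a b) :
    ∃ (L : C(Path b c, Path a c)) (L' : C(Path a c, Path b c)),
      (∀ δ, L δ = γ.trans δ) ∧ (∀ δ, L' δ = γ.symm.trans δ) ∧
      (L'.comp L).Homotopic (ContinuousMap.id (Path b c)) ∧
      (L.comp L').Homotopic (ContinuousMap.id (Path a c)) ∧
      ∃ E : ContinuousMap.HomotopyEquiv (Path b c) (Path a c),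
        ∀ δ, E.toFun δ = γ.trans δ := by
  set L : C(Path b c, Path a c) := ⟨fun δ => γ.trans δ, cont_trans γ⟩ with hL
  set L' : C(Path a c, Path b c) := ⟨fun δ => γ.symm.trans δ, cont_trans γ.symm⟩ with hL'
  have h1 : (L'.comp L).Homotopic (ContinuousMap.id (Path b c)) :=
    homot γ (L'.comp L) (fun δ => rfl)
  have h2 : (L.comp L').Homotopic (ContinuousMap.id (Path a c)) :=
    homot γ.symm (L.comp L') (fun δ => by
      show γ.trans (γ.symm.trans δ) = γ.symm.symm.trans (γ.symm.trans δ)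
      rw [Path.symm_symm])
  exact ⟨L, L', fun _ => rfl, fun _ => rfl, h1, h2, ⟨L, L', h1, h2⟩, fun _ => rfl⟩
end

section
/- Let X be a topological space, a b c : X, and γ : Path a b. Then the self-map of the path space Path b c sending δ to γ.symm.trans (γ.trans δ) is continuous and is homotopic, as a continuous map Path b c → Path b c, to the identity map of Path b c. -/
open unitInterval Set

namespace SymmTransTransAux

variable {X : Type*} [TopologicalSpace X] {a b c : X}

/-- The tail of `γ` from time `s` to `1`. -/
noncomputable def tail (γ : Path a b) (s : I) : Path (γ.extend ↑s) b :=
  (γ.truncate ↑s 1).cast (by rw [min_eq_left s.2.2]) γ.extend_one.symm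

theorem tail_apply (γ : Path a b) (s : I) (t : I) :
    tail γ s t = γ.extend (min (max ↑t ↑s) 1) := rfl

theorem tail_zero (γ : Path a b) : tail γ 0 = γ.cast (by simp) rfl := by
  ext t
  show γ.extend (min (max ↑t ↑(0:I)) 1) = γ t
  rw [Icc.coe_zero, max_eq_left t.2.1, min_eq_left t.2.2, Path.extend_extends']

theorem tail_one_apply (γ : Path a b) (t : I) : tail γ 1 t = b := by
  show γ.extend (min (max ↑t ↑(1:I)) 1) = b
  rw [Icc.coe_one, min_eq_right (le_max_right _ _), Path.extend_one]

/-- The first homotopy family. -/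
noncomputable def g (γ : Path a b) (p : I × Path b c) : Path b c :=
  (tail γ p.1).symm.trans ((tail γ p.1).trans p.2)

theorem hcont_g (γ : Path a b) : Continuous ↿(g (c := c) γ) := by
  have htail : Continuous ↿(fun p : I × Path b c => tail γ p.1) := by
    have hmap : Continuous (fun q : (I × Path b c) × I => ((↑q.1.1 : ℝ), ((1:ℝ), q.2))) := by
      fun_prop
    exact γ.truncate_continuous_family.comp hmap
  have h2 : Continuous ↿(fun p : I × Path b c => p.2) :=
    (continuous_snd.comp continuous_fst).eval continuous_snd
  exact Path.trans_continuous_family _ (Path.symm_continuous_family _ htail) _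
    (Path.trans_continuous_family _ htail _ h2)

/-- The second homotopy family: reparametrization. -/
noncomputable def N (s : I) (δ : Path b c) : Path b c where
  toFun t := δ.extend ((1 - ↑s) * max 0 (4 * ↑t - 3) + ↑s * ↑t)
  continuous_toFun := by fun_prop
  source' := by norm_num
  target' := by norm_num

theorem N_apply (s : I) (δ : Path b c) (t : I) :
    N s δ t = δ.extend ((1 - (s:ℝ)) * max 0 (4 * (t:ℝ) - 3) + (s:ℝ) * (t:ℝ)) := rfl

theorem hcont_N : Continuous ↿(fun p : I × Path b c => N p.1 p.2) := by
  have h : Continuous ↿(fun q : (I × Path b c) × I => q.1.2) :=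
    (continuous_snd.comp (continuous_fst.comp continuous_fst)).eval continuous_snd
  exact Continuous.pathExtend h (by fun_prop)

theorem g_zero (γ : Path a b) (δ : Path b c) :
    g γ (0, δ) = γ.symm.trans (γ.trans δ) := by
  simp only [g, tail_zero]
  ext t
  rfl

theorem g_one (γ : Path a b) (δ : Path b c) : g γ (1, δ) = N 0 δ := by
  ext t
  rw [g, N_apply]
  simp only [Path.trans_apply]
  have hsymm : ∀ u : I, (tail γ 1).symm u = b := fun u => tail_one_apply γ (σ u)
  split_ifs with h1 h2
  · rw [hsymm]
    have hle : 4 * (t:ℝ) - 3 ≤ 0 := by linarith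
    rw [max_eq_left hle]
    norm_num
  · rw [tail_one_apply]
    have hle : 4 * (t:ℝ) - 3 ≤ 0 := by linarith
    rw [max_eq_left hle]
    norm_num
  · have hge : (0:ℝ) ≤ 4 * (t:ℝ) - 3 := by linarith
    rw [max_eq_right hge]
    have hmem : 4 * (t:ℝ) - 3 ∈ (Icc (0:ℝ) 1) := ⟨hge, by have := t.2.2; linarith⟩
    norm_num
    rw [Path.extend_apply δ hmem]
    congr 1
    ext
    push_cast
    ring

theorem N_one (δ : Path b c) : N 1 δ = δ := by
  ext t
  rw [N_apply]
  norm_num [Path.extend_extends']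

end SymmTransTransAux

/-- The self-map `δ ↦ γ.symm.trans (γ.trans δ)` of the path space `Path b c`
is continuous and homotopic to the identity map. -/
theorem symm_trans_trans_homotopic_id {X : Type*} [TopologicalSpace X]
    (a b c : X) (γ : Path a b) :
    ∃ hcont : Continuous (fun δ : Path b c => γ.symm.trans (γ.trans δ)),
      ContinuousMap.Homotopic
        ⟨fun δ : Path b c => γ.symm.trans (γ.trans δ), hcont⟩
        (ContinuousMap.id (Path b c)) := by
  open SymmTransTransAux in
  have hcont : Continuous (fun δ : Path b c => γ.symm.trans (γ.trans δ)) :=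
    Continuous.path_trans continuous_const (Continuous.path_trans continuous_const continuous_id)
  refine ⟨hcont, ?_⟩
  have hNcont : Continuous (fun δ : Path b c => N 0 δ) := by
    apply Path.continuous_uncurry_iff.mp
    show Continuous fun q : Path b c × I => N 0 q.1 q.2
    exact (hcont_N (b := b) (c := c)).comp
      (by fun_prop : Continuous fun q : Path b c × I => (((0:I), q.1), q.2))
  have H1 : ContinuousMap.Homotopy
      ⟨fun δ : Path b c => γ.symm.trans (γ.trans δ), hcont⟩ ⟨fun δ => N 0 δ, hNcont⟩ :=
    { toFun := fun p => g γ p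
      continuous_toFun := Path.continuous_uncurry_iff.mp (hcont_g γ)
      map_zero_left := fun δ => g_zero γ δ
      map_one_left := fun δ => g_one γ δ }
  have H2 : ContinuousMap.Homotopy ⟨fun δ : Path b c => N 0 δ, hNcont⟩
      (ContinuousMap.id (Path b c)) :=
    { toFun := fun p => N p.1 p.2
      continuous_toFun := Path.continuous_uncurry_iff.mp hcont_N
      map_zero_left := fun δ => rfl
      map_one_left := fun δ => N_one δ }
  exact ContinuousMap.Homotopic.trans ⟨H1⟩ ⟨H2⟩
end

section
/- Let p : E → X be a covering map (IsCoveringMap p) between topological spaces and let e₀ : E. Equip A = {σ : C([0,1], E) // σ 0 = e₀} and B = {γ : C([0,1], X) // γ 0 = p e₀} with the subspace topologies induced from the compact-open topology on the respective continuous-map spaces. Then the map A → B given by post-composition with p, σ ↦ p ∘ σ, is a homeomorphism. -/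
section AuxCoveringLift
open Set Topology unitInterval

variable {E X A : Type*} [TopologicalSpace E] [TopologicalSpace X] [TopologicalSpace A]
  {p : E → X}

/-- Local (in the parameter) homotopy lifting for covering maps. -/
theorem covering_local_lift (hp : IsCoveringMap p) {F : A × I → X} (hF : Continuous F)
    {f₀ : A → E} (hf₀ : Continuous f₀) (h₀ : ∀ a, p (f₀ a) = F (a, 0)) (a₀ : A) :
    ∃ N : Set A, IsOpen N ∧ a₀ ∈ N ∧ ∃ H : A × I → E,
      ContinuousOn H (N ×ˢ univ) ∧ (∀ a ∈ N, H (a, 0) = f₀ a) ∧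
      ∀ a ∈ N, ∀ u : I, p (H (a, u)) = F (a, u) := by
  classical
  -- open cover of the interval by preimages of evenly covered sets
  have hFa₀ : Continuous fun u : I => F (a₀, u) := hF.comp (continuous_const.prodMk continuous_id)
  have hnon : ∀ u : I, Nonempty ↑(p ⁻¹' {F (a₀, u)}) := by
    have hcl : IsClopen (Set.range p) := by
      refine ⟨?_, hp.isOpenMap.isOpen_range⟩
      rw [← isOpen_compl_iff, isOpen_iff_forall_mem_open]
      intro x hx
      obtain ⟨-, U, hxU, hU, -, H, -⟩ := hp x
      refine ⟨U, ?_, hU, hxU⟩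
      rintro y hyU ⟨e, rfl⟩
      exact hx ⟨((H ⟨e, hyU⟩).2 : E), (H ⟨e, hyU⟩).2.2⟩
    have hS : IsClopen ((fun u : I => F (a₀, u)) ⁻¹' Set.range p) := hcl.preimage hFa₀
    have hSu := hS.eq_univ ⟨0, f₀ a₀, h₀ a₀⟩
    intro u
    have hu : u ∈ (fun u : I => F (a₀, u)) ⁻¹' Set.range p := by rw [hSu]; trivial
    obtain ⟨e, he⟩ := hu
    exact ⟨⟨e, he⟩⟩
  set c : I → Set I := fun i => (fun u => F (a₀, u)) ⁻¹' (hp (F (a₀, i))).toTrivialization.baseSet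
    with hc
  have hc₁ : ∀ i, IsOpen (c i) := fun i =>
    (hp (F (a₀, i))).toTrivialization.open_baseSet.preimage hFa₀
  have hc₂ : univ ⊆ ⋃ i, c i := fun u _ =>
    mem_iUnion.2 ⟨u, (hp (F (a₀, u))).mem_toTrivialization_baseSet⟩
  obtain ⟨t, ht0, htmono, ⟨n₀, ht1⟩, hsub⟩ :=
    exists_monotone_Icc_subset_open_cover_unitInterval hc₁ hc₂
  choose idx hidx using hsub
  -- trivializations along the path
  have main : ∀ n : ℕ, ∃ Tn : Bundle.Trivialization (↑(p ⁻¹' {F (a₀, idx n)}) : Type _) p,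
      ∀ u ∈ Icc (t n) (t (n + 1)), F (a₀, u) ∈ Tn.baseSet :=
    fun n => ⟨(hp (F (a₀, idx n))).toTrivialization, fun u hu => hidx n hu⟩
  choose T hbase₀ using main
  -- tube lemma: a neighborhood of a₀ over which each interval piece stays evenly covered
  have tube : ∀ n, ∃ Nn : Set A, IsOpen Nn ∧ a₀ ∈ Nn ∧
      ∀ a ∈ Nn, ∀ u ∈ Icc (t n) (t (n + 1)), F (a, u) ∈ (T n).baseSet := by
    intro n
    have hopen : IsOpen (F ⁻¹' (T n).baseSet) := (T n).open_baseSet.preimage hF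
    have hsub' : ({a₀} : Set A) ×ˢ Icc (t n) (t (n + 1)) ⊆ F ⁻¹' (T n).baseSet := by
      rintro ⟨a, u⟩ ⟨ha, hu⟩
      rcases ha with rfl
      exact hbase₀ n u hu
    obtain ⟨u', v', hu', hv', ha', hIcc, hsub''⟩ :=
      generalized_tube_lemma isCompact_singleton isClosed_Icc.isCompact hopen hsub'
    exact ⟨u', hu', ha' rfl, fun a ha u hu => hsub'' ⟨ha, hIcc hu⟩⟩
  choose Nn hNnopen hNnmem hNn using tube
  set N : Set A := ⋂ k ∈ Finset.range n₀, Nn k with hN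
  have hNopen : IsOpen N := isOpen_biInter_finset fun k _ => hNnopen k
  have hNmem : a₀ ∈ N := mem_iInter₂.2 fun k _ => hNnmem k
  have hNsub : ∀ k, k < n₀ → N ⊆ Nn k := fun k hk =>
    biInter_subset_of_mem (Finset.mem_range.2 hk)
  refine ⟨N, hNopen, hNmem, ?_⟩
  -- inductive construction of partial lifts
  suffices h : ∀ n, n ≤ n₀ → ∃ H : A × I → E, ContinuousOn H (N ×ˢ univ) ∧
      (∀ a ∈ N, H (a, 0) = f₀ a) ∧ ∀ a ∈ N, ∀ u : I, u ≤ t n → p (H (a, u)) = F (a, u) by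
    obtain ⟨H, h1, h2, h3⟩ := h n₀ le_rfl
    exact ⟨H, h1, h2, fun a ha u => h3 a ha u ((ht1 n₀ le_rfl) ▸ le_one u)⟩
  intro n
  induction n with
  | zero =>
    intro _
    refine ⟨fun x => f₀ x.1, (hf₀.comp continuous_fst).continuousOn, fun a _ => rfl,
      fun a _ u hu => ?_⟩
    have h00 : u = 0 := le_antisymm (ht0 ▸ hu) u.2.1
    rw [h00, h₀]
  | succ n ih =>
    intro hn1
    obtain ⟨H, Hcont, H0, Hp⟩ := ih (Nat.le_of_succ_le hn1)
    have hnlt : n < n₀ := hn1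
    have htn : t n ≤ t (n + 1) := htmono (Nat.le_succ n)
    -- the "clamped time" map
    set m : I → I := fun u => ⟨min (u : ℝ) ((t (n + 1) : I) : ℝ),
      ⟨le_min u.2.1 (t (n + 1)).2.1, (min_le_left _ _).trans u.2.2⟩⟩ with hm
    have hmcont : Continuous m :=
      Continuous.subtype_mk (continuous_subtype_val.min continuous_const) _
    have hmIcc : ∀ u : I, t n ≤ u → m u ∈ Icc (t n) (t (n + 1)) := fun u hu =>
      ⟨Subtype.coe_le_coe.1 (le_min (Subtype.coe_le_coe.2 hu) (Subtype.coe_le_coe.2 htn)),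
       Subtype.coe_le_coe.1 (min_le_right _ _)⟩
    have hmtn : m (t n) = t n := Subtype.ext (min_eq_left (Subtype.coe_le_coe.2 htn))
    have hmid : ∀ u : I, u ≤ t (n + 1) → m u = u := fun u hu =>
      Subtype.ext (min_eq_left (Subtype.coe_le_coe.2 hu))
    -- the source membership of the previous endpoint
    have hsource : ∀ a ∈ N, H (a, t n) ∈ (T n).source := by
      intro a ha
      rw [(T n).mem_source, Hp a ha (t n) le_rfl]
      exact hNn n a (hNsub n hnlt ha) (t n) ⟨le_rfl, htn⟩
    set G : A × I → E := fun x =>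
      (T n).toOpenPartialHomeomorph.symm (F (x.1, m x.2), ((T n) (H (x.1, t n))).2) with hG
    have htarget : ∀ a ∈ N, ∀ u : I, t n ≤ u →
        (F (a, m u), ((T n) (H (a, t n))).2) ∈ (T n).target := by
      intro a ha u hu
      rw [(T n).mem_target]
      exact hNn n a (hNsub n hnlt ha) (m u) (hmIcc u hu)
    have hGp : ∀ a ∈ N, ∀ u : I, t n ≤ u → p (G (a, u)) = F (a, m u) := fun a ha u hu =>
      (T n).proj_symm_apply (htarget a ha u hu)
    -- continuity of G on the region t n ≤ u
    have hGcont : ContinuousOn G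
        ((N ×ˢ (univ : Set I)) ∩ {x : A × I | ((t n : I) : ℝ) ≤ (x.2 : ℝ)}) := by
      have h1 : ContinuousOn (fun x : A × I => H (x.1, t n))
          ((N ×ˢ (univ : Set I)) ∩ {x : A × I | ((t n : I) : ℝ) ≤ (x.2 : ℝ)}) := by
        apply Hcont.comp (continuous_fst.prodMk continuous_const).continuousOn
        rintro ⟨a, u⟩ ⟨⟨ha, -⟩, -⟩
        exact ⟨ha, mem_univ _⟩
      have h2 : ContinuousOn (fun x : A × I => (T n) (H (x.1, t n)))
          ((N ×ˢ (univ : Set I)) ∩ {x : A × I | ((t n : I) : ℝ) ≤ (x.2 : ℝ)}) := by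
        apply ((T n).toOpenPartialHomeomorph.continuousOn).comp h1
        rintro ⟨a, u⟩ ⟨⟨ha, -⟩, -⟩
        exact hsource a ha
      have hinner : ContinuousOn (fun x : A × I => (F (x.1, m x.2), ((T n) (H (x.1, t n))).2))
          ((N ×ˢ (univ : Set I)) ∩ {x : A × I | ((t n : I) : ℝ) ≤ (x.2 : ℝ)}) :=
        ContinuousOn.prodMk
          ((hF.comp (continuous_fst.prodMk (hmcont.comp continuous_snd))).continuousOn)
          (continuous_snd.comp_continuousOn h2)
      apply ((T n).toOpenPartialHomeomorph.continuousOn_symm).comp hinner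
      rintro ⟨a, u⟩ ⟨⟨ha, -⟩, (hu : ((t n : I) : ℝ) ≤ (u : ℝ))⟩
      exact htarget a ha u (Subtype.coe_le_coe.1 hu)
    -- the glued lift
    refine ⟨fun x => if ((x.2 : ℝ) ≤ ((t n : I) : ℝ)) then H x else G x, ?_, ?_, ?_⟩
    · apply ContinuousOn.if
      · rintro ⟨a, u⟩ ⟨⟨ha, -⟩, hfr⟩
        have hfr' : (u : ℝ) = ((t n : I) : ℝ) :=
          frontier_le_subset_eq (f := fun x : A × I => (x.2 : ℝ))
            (g := fun _ : A × I => ((t n : I) : ℝ))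
            (continuous_subtype_val.comp continuous_snd) continuous_const hfr
        have hu' : u = t n := Subtype.ext hfr'
        show H (a, u) = G (a, u)
        rw [hu']
        simp only [hG, hmtn]
        have hFp : F (a, t n) = p (H (a, t n)) := (Hp a ha (t n) le_rfl).symm
        rw [hFp, (T n).symm_apply_mk_proj (hsource a ha)]
      · exact Hcont.mono fun x hx => hx.1
      · apply hGcont.mono
        intro x hx
        refine ⟨hx.1, ?_⟩
        have hcl : closure {x : A × I | ¬ ((x.2 : ℝ) ≤ ((t n : I) : ℝ))}
            ⊆ {x : A × I | ((t n : I) : ℝ) ≤ (x.2 : ℝ)} :=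
          closure_minimal (fun x hx => le_of_lt (not_le.1 hx))
            (isClosed_le continuous_const (continuous_subtype_val.comp continuous_snd))
        exact hcl hx.2
    · intro a ha
      have hcond : (((0 : I) : ℝ)) ≤ ((t n : I) : ℝ) := by simpa using (t n).2.1
      simp only [if_pos hcond]
      exact H0 a ha
    · intro a ha u hu
      by_cases h : (u : ℝ) ≤ ((t n : I) : ℝ)
      · simpa only [if_pos h] using Hp a ha u (Subtype.coe_le_coe.1 h)
      · simp only [if_neg h]
        rw [hGp a ha u (le_of_not_ge (fun h' => h (Subtype.coe_le_coe.2 h'))), hmid u hu]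

/-- Uniqueness of path lifts. -/
theorem covering_lift_unique (hp : IsCoveringMap p) {g₁ g₂ : I → E}
    (h₁ : Continuous g₁) (h₂ : Continuous g₂) (he : ∀ u, p (g₁ u) = p (g₂ u))
    (h0 : g₁ 0 = g₂ 0) : g₁ = g₂ :=
  hp.eq_of_comp_eq h₁ h₂ (funext he) 0 h0

/-- Global homotopy lifting for covering maps, with constant initial lift. -/
theorem covering_global_lift (hp : IsCoveringMap p) {F : A × I → X} (hF : Continuous F)
    (e₀ : E) (h₀ : ∀ a, p e₀ = F (a, 0)) :
    ∃ Hg : A × I → E, Continuous Hg ∧ (∀ a, Hg (a, 0) = e₀) ∧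
      ∀ a u, p (Hg (a, u)) = F (a, u) := by
  classical
  have key := fun a₀ : A => covering_local_lift (A := A) hp hF (f₀ := fun _ => e₀)
    continuous_const (fun a => (h₀ a).symm ▸ rfl) a₀
  choose N hNo hNm H hHc hH0 hHp using key
  have curve : ∀ a₀ : A, ∀ a ∈ N a₀, Continuous fun u : I => H a₀ (a, u) := by
    intro a₀ a ha
    exact (hHc a₀).comp_continuous (continuous_const.prodMk continuous_id)
      fun u => Set.mk_mem_prod ha (Set.mem_univ u)
  have agree : ∀ a₀ : A, ∀ a ∈ N a₀, ∀ u : I, H a₀ (a, u) = H a (a, u) := by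
    intro a₀ a ha u
    have := covering_lift_unique hp (curve a₀ a ha) (curve a a (hNm a))
      (fun u => by rw [hHp a₀ a ha u, hHp a a (hNm a) u])
      (by rw [hH0 a₀ a ha, hH0 a a (hNm a)])
    exact congrFun this u
  refine ⟨fun x => H x.1 x, ?_, fun a => hH0 a a (hNm a), fun a u => hHp a a (hNm a) u⟩
  rw [continuous_iff_continuousAt]
  rintro ⟨a₀, u⟩
  have hmem : (a₀, u) ∈ N a₀ ×ˢ (Set.univ : Set I) :=
    Set.mk_mem_prod (hNm a₀) (Set.mem_univ u)
  have hnhds : N a₀ ×ˢ (Set.univ : Set I) ∈ 𝓝 (a₀, u) :=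
    ((hNo a₀).prod isOpen_univ).mem_nhds hmem
  refine ((hHc a₀).continuousAt hnhds).congr ?_
  exact Filter.eventuallyEq_of_mem hnhds fun y hy => agree a₀ y.1 hy.1 y.2

end AuxCoveringLift

/-- The lifting homeomorphism, given global lifting data. -/
noncomputable def coveringLiftHomeo {E X : Type*} [TopologicalSpace E]
    [TopologicalSpace X] (p : E → X) (hp : IsCoveringMap p) (e₀ : E)
    (Hg : {γ : C(unitInterval, X) // γ 0 = p e₀} × unitInterval → E)
    (hHgcont : Continuous Hg) (hHg0 : ∀ a, Hg (a, 0) = e₀)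
    (hHgp : ∀ a u, p (Hg (a, u)) = a.1 u) :
    {σ : C(unitInterval, E) // σ 0 = e₀} ≃ₜ {γ : C(unitInterval, X) // γ 0 = p e₀} where
  toFun σ := ⟨(ContinuousMap.mk p hp.continuous).comp σ.1, by
    show p (σ.1 0) = p e₀; rw [σ.2]⟩
  invFun γ := ⟨(ContinuousMap.mk Hg hHgcont).curry γ, hHg0 γ⟩
  left_inv σ := by
    apply Subtype.ext
    apply ContinuousMap.ext
    intro u
    have hc : Continuous fun u : unitInterval =>
        Hg (⟨(ContinuousMap.mk p hp.continuous).comp σ.1, by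
          show p (σ.1 0) = p e₀; rw [σ.2]⟩, u) :=
      hHgcont.comp (continuous_const.prodMk continuous_id)
    have huniq := covering_lift_unique hp hc σ.1.continuous
      (fun u => by
        rw [hHgp ⟨(ContinuousMap.mk p hp.continuous).comp σ.1, by
          show p (σ.1 0) = p e₀; rw [σ.2]⟩ u]; rfl)
      (by
        rw [hHg0 ⟨(ContinuousMap.mk p hp.continuous).comp σ.1, by
          show p (σ.1 0) = p e₀; rw [σ.2]⟩]; exact σ.2.symm)
    exact congrFun huniq u
  right_inv γ := by
    apply Subtype.ext
    apply ContinuousMap.ext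
    intro u
    exact hHgp γ u
  continuous_toFun := Continuous.subtype_mk
    (((ContinuousMap.mk p hp.continuous).continuous_postcomp).comp
      continuous_subtype_val) fun σ => by show p (σ.1 0) = p e₀; rw [σ.2]
  continuous_invFun := Continuous.subtype_mk
    (ContinuousMap.mk Hg hHgcont).curry.continuous fun γ => hHg0 γ

/-- For a covering map `p : E → X` and a point `e₀ : E`, post-composition with `p`
is a homeomorphism from the space of continuous maps `[0,1] → E` starting at `e₀`
onto the space of continuous maps `[0,1] → X` starting at `p e₀` (both with the
subspace topology from the compact-open topology). -/
theorem coveringMap_pathLift_homeomorph {E X : Type*} [TopologicalSpace E]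
    [TopologicalSpace X] (p : E → X) (hp : IsCoveringMap p) (e₀ : E) :
    ∃ h : {σ : C(unitInterval, E) // σ 0 = e₀} ≃ₜ
          {γ : C(unitInterval, X) // γ 0 = p e₀},
      ∀ σ : {σ : C(unitInterval, E) // σ 0 = e₀},
        ((h σ : C(unitInterval, X)) : unitInterval → X) = p ∘ (σ : C(unitInterval, E)) := by
  classical
  have hF : Continuous fun x : {γ : C(unitInterval, X) // γ 0 = p e₀} × unitInterval => x.1.1 x.2 :=
    continuous_eval.comp
      ((continuous_subtype_val.comp continuous_fst).prodMk continuous_snd)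
  obtain ⟨Hg, hHgcont, hHg0, hHgp⟩ := covering_global_lift hp hF e₀ (fun γ => γ.2.symm)
  have curve : ∀ γ : {γ : C(unitInterval, X) // γ 0 = p e₀},
      Continuous fun u : unitInterval => Hg (γ, u) :=
    fun γ => hHgcont.comp (continuous_const.prodMk continuous_id)
  exact ⟨coveringLiftHomeo p hp e₀ Hg hHgcont hHg0 hHgp, fun σ => rfl⟩
end

section
/- Let p : E → X be a covering map (IsCoveringMap p), let e₀ : E, set a = p e₀, and let b : X. Consider the sigma type Σ (e : {e : E // p e = b}), Path e₀ ↑e, equipped with the disjoint-union (sigma) topology, where each Path e₀ ↑e carries its usual path-space topology. Then the map from this sigma type to Path a b sending a pair (e, σ) to the path p ∘ σ (a path in X from p e₀ = a to p ↑e = b) is a homeomorphism. -/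
open Set Topology Filter

local notation "I01" => unitInterval

section Helpers

theorem myContinuousOn_if_le {α β γ : Type*} [TopologicalSpace α] [TopologicalSpace β]
    [LinearOrder α] [OrderClosedTopology α]
    [TopologicalSpace γ] {f g : β → α} {f' g' : β → γ} {s : Set β}
    [∀ x, Decidable (f x ≤ g x)]
    (hf' : ContinuousOn f' s) (hg' : ContinuousOn g' s) (hf : Continuous f) (hg : Continuous g)
    (hfg : ∀ x ∈ s, f x = g x → f' x = g' x) :
    ContinuousOn (fun x => if f x ≤ g x then f' x else g' x) s := by
  rw [continuousOn_iff_continuous_restrict] at hf' hg' ⊢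
  have h : Set.domRestrict s (fun x => if f x ≤ g x then f' x else g' x)
      = fun x : s => if f (x : β) ≤ g (x : β) then s.restrict f' x else s.restrict g' x := rfl
  rw [h]
  exact Continuous.if_le hf' hg' (hf.comp continuous_subtype_val)
    (hg.comp continuous_subtype_val) (fun x hx => hfg x x.2 hx)

end Helpers

section Lifting

variable {E X A : Type*} [TopologicalSpace E] [TopologicalSpace X] [TopologicalSpace A]
  {p : E → X}

/-- Lifting over one block `[s,u] × N` given a trivialization containing the image. -/
theorem block_lift {F : Type*} [TopologicalSpace F] (T : Bundle.Trivialization F p)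
    {H : ℝ × A → X} (hH : Continuous H) {N : Set A} {s u : ℝ} (hsu : s ≤ u)
    (hbase : ∀ t ∈ Icc s u, ∀ a ∈ N, H (t, a) ∈ T.baseSet)
    {G : A → E} (hG : ContinuousOn G N) (hpG : ∀ a ∈ N, p (G a) = H (s, a)) :
    ∃ B : ℝ × A → E, ContinuousOn B (univ ×ˢ N) ∧
      (∀ t ∈ Icc s u, ∀ a ∈ N, p (B (t, a)) = H (t, a)) ∧
      (∀ a ∈ N, B (s, a) = G a) := by
  have hGsrc : ∀ a ∈ N, G a ∈ T.source := fun a ha =>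
    T.mem_source.mpr (by rw [hpG a ha]; exact hbase s ⟨le_rfl, hsu⟩ a ha)
  set c : ℝ → ℝ := fun t => max s (min t u) with hc
  have hcmem : ∀ t, c t ∈ Icc s u := fun t => ⟨le_max_left _ _, max_le hsu (min_le_right _ _)⟩
  refine ⟨fun q => T.toOpenPartialHomeomorph.symm (H (c q.1, q.2), (T (G q.2)).2), ?_, ?_, ?_⟩
  · apply T.toOpenPartialHomeomorph.continuousOn_symm.comp
    · apply ContinuousOn.prodMk
      · exact (hH.comp ((continuous_const.max (continuous_fst.min continuous_const)).prodMk
          continuous_snd)).continuousOn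
      · exact ((T.toOpenPartialHomeomorph.continuousOn.comp (hG.comp continuousOn_snd
          (fun q hq => hq.2)) (fun q hq => hGsrc q.2 hq.2))).snd
    · intro q hq
      exact T.mem_target.mpr (hbase _ (hcmem q.1) q.2 hq.2)
  · intro t ht a ha
    have hct : c t = t := by
      rw [hc]; simp only; rw [min_eq_left ht.2, max_eq_right ht.1]
    dsimp only
    rw [hct]
    exact T.proj_symm_apply (T.mem_target.mpr (hbase t ht a ha))
  · intro a ha
    have hcs : c s = s := by
      rw [hc]; simp only; rw [min_eq_left hsu, max_self]
    have h1 : (H (c s, a), (T (G a)).2) = T (G a) := by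
      rw [hcs]
      exact Prod.ext (by rw [← hpG a ha]; exact (T.coe_fst (hGsrc a ha)).symm) rfl
    simp only [h1]
    exact T.toOpenPartialHomeomorph.left_inv (hGsrc a ha)

/-- Local (in the parameter) lifting of a family of paths. -/
theorem exists_local_lift (hp : IsCoveringMap p) {H : ℝ × A → X} (hH : Continuous H)
    [∀ q : ℝ × A, Nonempty (p ⁻¹' {H q})] (a₀ : A) :
    ∃ N : Set A, IsOpen N ∧ a₀ ∈ N ∧
      ∀ f₀ : A → E, ContinuousOn f₀ N → (∀ a ∈ N, p (f₀ a) = H (0, a)) →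
      ∃ F : ℝ × A → E, ContinuousOn F (univ ×ˢ N) ∧
        (∀ t ∈ Icc (0:ℝ) 1, ∀ a ∈ N, p (F (t, a)) = H (t, a)) ∧
        ∀ a ∈ N, F (0, a) = f₀ a := by
  have key : ∀ t : ℝ, ∃ VW : Set ℝ × Set A, IsOpen VW.1 ∧ IsOpen VW.2 ∧ t ∈ VW.1 ∧ a₀ ∈ VW.2 ∧
      ∀ t' ∈ VW.1, ∀ a ∈ VW.2, H (t', a) ∈ (hp (H (t, a₀))).toTrivialization.baseSet := by
    intro t
    have hopen : IsOpen (H ⁻¹' (hp (H (t, a₀))).toTrivialization.baseSet) :=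
      (hp (H (t, a₀))).toTrivialization.open_baseSet.preimage hH
    have hmem : (t, a₀) ∈ H ⁻¹' (hp (H (t, a₀))).toTrivialization.baseSet :=
      (hp (H (t, a₀))).mem_toTrivialization_baseSet
    obtain ⟨V, W, hV, hW, htV, haW, hsub⟩ := isOpen_prod_iff.mp hopen t a₀ hmem
    exact ⟨(V, W), hV, hW, htV, haW, fun t' ht' a ha => hsub (Set.mk_mem_prod ht' ha)⟩
  choose VW hV hW htV haW hbase using key
  obtain ⟨δ, δpos, hball⟩ := lebesgue_number_lemma_of_metric (isCompact_Icc (a := (0:ℝ)) (b := 1))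
    hV (fun t _ => mem_iUnion.mpr ⟨t, htV t⟩)
  obtain ⟨n, hn⟩ := exists_nat_one_div_lt δpos
  set m : ℕ := n + 1 with hm
  have hmpos : (0:ℝ) < (m : ℝ) := by positivity
  set s : ℕ → ℝ := fun j => j / m with hs
  have hsj : ∀ j : ℕ, j ≤ m → s j ∈ Icc (0:ℝ) 1 := by
    intro j hj
    constructor
    · positivity
    · rw [hs]; dsimp only; rw [div_le_one hmpos]; exact_mod_cast hj
  have hstep : ∀ j : ℕ, s (j + 1) - s j = 1 / m := by
    intro j
    rw [hs]; dsimp only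
    rw [div_sub_div_same]
    push_cast
    ring_nf
  have hsmono : ∀ j : ℕ, s j ≤ s (j + 1) := by
    intro j
    have := hstep j
    nlinarith [one_div_pos.mpr hmpos]
  choose τ hτ using fun (j : ℕ) (hj : j < m) => hball (s j) (hsj j hj.le)
  set N : Set A := ⋂ j : Fin m, (VW (τ j j.2)).2 with hN
  have hNopen : IsOpen N := isOpen_iInter_of_finite fun j => hW _
  have hNmem : a₀ ∈ N := mem_iInter.mpr fun j => haW _
  have hNsub : ∀ j : Fin m, N ⊆ (VW (τ j j.2)).2 := fun j => iInter_subset _ j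
  refine ⟨N, hNopen, hNmem, ?_⟩
  intro f₀ hf₀ hpf₀
  have hIccsub : ∀ (j : Fin m), ∀ t ∈ Icc (s j) (s (j+1)), ∀ a ∈ N,
      H (t, a) ∈ (hp (H (τ j j.2, a₀))).toTrivialization.baseSet := by
    intro j t ht a ha
    apply hbase (τ j j.2) t ?_ a (hNsub j ha)
    apply hτ j j.2
    rw [Metric.mem_ball, Real.dist_eq, abs_of_nonneg (sub_nonneg.mpr ht.1)]
    have h1 : t - s j ≤ 1 / m := by
      have := hstep j
      have := ht.2
      linarith
    have h2 : (1 : ℝ) / m < δ := by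
      rw [hm]
      push_cast
      exact hn
    linarith
  have main : ∀ j : ℕ, j ≤ m → ∃ F : ℝ × A → E, ContinuousOn F (univ ×ˢ N) ∧
      (∀ t ∈ Icc (0:ℝ) (s j), ∀ a ∈ N, p (F (t, a)) = H (t, a)) ∧
      ∀ a ∈ N, F (0, a) = f₀ a := by
    intro j
    induction j with
    | zero =>
      intro _
      refine ⟨fun q => f₀ q.2, hf₀.comp continuousOn_snd (fun q hq => hq.2), ?_, fun a _ => rfl⟩
      intro t ht a ha
      have hs0 : s 0 = 0 := by rw [hs]; simp
      rw [hs0] at ht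
      obtain rfl : t = 0 := le_antisymm ht.2 ht.1
      exact hpf₀ a ha
    | succ j ih =>
      intro hj1
      have hj : j < m := hj1
      obtain ⟨F, hFc, hFp, hF0⟩ := ih (Nat.le_of_succ_le hj1)
      obtain ⟨B, hBc, hBp, hBs⟩ := block_lift ((hp (H (τ j hj, a₀))).toTrivialization) hH
        (hsmono j) (hIccsub ⟨j, hj⟩) (N := N)
        (G := fun a => F (s j, a))
        (hFc.comp ((continuous_const.prodMk continuous_id).continuousOn)
          (fun a ha => ⟨trivial, ha⟩))
        (fun a ha => hFp (s j) ⟨(hsj j hj.le).1, le_rfl⟩ a ha)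
      refine ⟨fun q => if q.1 ≤ s j then F q else B q, ?_, ?_, ?_⟩
      · exact myContinuousOn_if_le hFc hBc continuous_fst continuous_const
          (fun q hq heq => by
            rw [show q = (s j, q.2) from Prod.ext heq rfl]
            exact (hBs q.2 hq.2).symm)
      · intro t ht a ha
        by_cases h : t ≤ s j
        · simpa [h] using hFp t ⟨ht.1, h⟩ a ha
        · simp only [h, if_false]
          exact hBp t ⟨le_of_not_ge h, ht.2⟩ a ha
      · intro a ha
        have h0 : (0:ℝ) ≤ s j := (hsj j hj.le).1
        simpa [h0] using hF0 a ha
  obtain ⟨F, hFc, hFp, hF0⟩ := main m le_rfl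
  have hsm : s m = 1 := by rw [hs]; dsimp only; rw [div_self (ne_of_gt hmpos)]
  rw [hsm] at hFp
  exact ⟨F, hFc, hFp, hF0⟩

/-- Global lifting of a family of paths with a continuous initial condition. -/
theorem exists_family_lift (hp : IsCoveringMap p) {H : ℝ × A → X} (hH : Continuous H)
    [∀ q : ℝ × A, Nonempty (p ⁻¹' {H q})]
    {f₀ : A → E} (hf₀ : Continuous f₀) (hpf₀ : ∀ a, p (f₀ a) = H (0, a)) :
    ∃ F : I01 × A → E, Continuous F ∧ (∀ q : I01 × A, p (F q) = H ((q.1 : ℝ), q.2)) ∧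
      ∀ a, F (0, a) = f₀ a := by
  choose N hNopen hNmem hNlift using fun a => exists_local_lift hp hH a
  choose Fl hFlc hFlp hFl0 using fun a =>
    hNlift a f₀ hf₀.continuousOn (fun a' _ => hpf₀ a')
  refine ⟨fun q => Fl q.2 ((q.1 : ℝ), q.2), ?_, ?_, ?_⟩
  · rw [continuous_iff_continuousAt]
    rintro ⟨t, a⟩
    have key : ∀ a' ∈ N a, ∀ r ∈ Icc (0:ℝ) 1, Fl a' (r, a') = Fl a (r, a') := by
      intro a' ha' r hr
      have heq : EqOn (fun r : ℝ => Fl a' (r, a')) (fun r : ℝ => Fl a (r, a')) (Icc 0 1) := by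
        apply hp.eqOn_of_comp_eqOn isPreconnected_Icc
        · exact (hFlc a').comp ((continuous_id.prodMk continuous_const).continuousOn)
            (fun r _ => ⟨trivial, hNmem a'⟩)
        · exact (hFlc a).comp ((continuous_id.prodMk continuous_const).continuousOn)
            (fun r _ => ⟨trivial, ha'⟩)
        · intro r hr
          show p (Fl a' (r, a')) = p (Fl a (r, a'))
          rw [hFlp a' r hr a' (hNmem a'), hFlp a r hr a' ha']
        · exact (left_mem_Icc.mpr zero_le_one)
        · show Fl a' (0, a') = Fl a (0, a')
          rw [hFl0 a' a' (hNmem a'), hFl0 a a' ha']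
      exact heq hr
    have hopen : IsOpen ((fun q : I01 × A => q.2) ⁻¹' (N a)) :=
      (hNopen a).preimage continuous_snd
    have hev : (fun q : I01 × A => Fl q.2 ((q.1 : ℝ), q.2))
        =ᶠ[𝓝 (t, a)] (fun q : I01 × A => Fl a ((q.1 : ℝ), q.2)) := by
      apply eventually_of_mem (hopen.mem_nhds (by exact hNmem a))
      rintro ⟨t', a'⟩ ha'
      exact key a' ha' t' t'.2
    apply ContinuousAt.congr _ hev.symm
    have hcont : ContinuousAt (fun q : I01 × A => Fl a ((q.1 : ℝ), q.2)) (t, a) := by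
      apply ContinuousAt.comp (f := fun q : I01 × A => ((q.1 : ℝ), q.2))
      · exact (hFlc a).continuousAt
          (((isOpen_univ.prod (hNopen a)).mem_nhds (by exact ⟨trivial, hNmem a⟩)))
      · exact (continuous_subtype_val.fst'.prodMk continuous_snd).continuousAt
    exact hcont
  · rintro ⟨t, a⟩
    exact hFlp a t t.2 a (hNmem a)
  · intro a
    exact hFl0 a a (hNmem a)

end Lifting

/-- For a covering map `p : E → X`, a point `e₀ : E` and `b : X`, the disjoint union
over points `e` of the fiber of `b` of the path spaces `Path e₀ e` is homeomorphic
to the path space `Path (p e₀) b`, via `(e, σ) ↦ p ∘ σ`. -/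
theorem coveringMap_path_space_sigma_homeomorph {E X : Type*} [TopologicalSpace E]
    [TopologicalSpace X] (p : E → X) (hp : IsCoveringMap p) (e₀ : E) (b : X) :
    ∃ h : (Σ e : {e : E // p e = b}, Path e₀ (e : E)) ≃ₜ Path (p e₀) b,
      ∀ (e : {e : E // p e = b}) (σ : Path e₀ (e : E)),
        h ⟨e, σ⟩ = (σ.map hp.continuous).cast rfl e.prop.symm := by
  classical
  set A := Path (p e₀) b with hA
  -- the evaluation family
  set H : ℝ × A → X := fun q => q.2.extend q.1 with hH
  have hHc : Continuous H := by
    apply Continuous.pathExtend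
    · exact continuous_eval.comp ((continuous_snd.comp continuous_fst).prodMk continuous_snd)
    · exact continuous_fst
  haveI hne : ∀ q : ℝ × A, Nonempty (p ⁻¹' {H q}) := fun q => by
    obtain ⟨Γ, hΓ, -⟩ := hp.exists_path_lifts (q.2 : C(I01, X)) e₀ q.2.source
    exact ⟨⟨Γ (projIcc 0 1 zero_le_one q.1), show p _ = H q from congrFun hΓ _⟩⟩
  obtain ⟨F, hFc, hFp, hF0⟩ := exists_family_lift hp hHc (f₀ := fun _ => e₀)
    continuous_const (fun γ => by simp [hH])
  have hFp' : ∀ (t : I01) (γ : A), p (F (t, γ)) = γ t := by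
    intro t γ
    rw [hFp (t, γ)]
    exact γ.extend_extends'  t
  -- auxiliary: equality in the sigma type
  have sigma_eq : ∀ (e e' : {e : E // p e = b}) (σ : Path e₀ (e : E)) (σ' : Path e₀ (e' : E)),
      (e : E) = (e' : E) → (∀ t, σ t = σ' t) →
      (⟨e, σ⟩ : Σ e : {e : E // p e = b}, Path e₀ (e : E)) = ⟨e', σ'⟩ := by
    rintro ⟨e, he⟩ ⟨e', he'⟩ σ σ' h hfun
    dsimp only at h
    subst h
    have : σ = σ' := Path.ext (funext hfun)
    rw [this]
  -- the forward map
  set f : (Σ e : {e : E // p e = b}, Path e₀ (e : E)) → A :=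
    fun s => (s.2.map hp.continuous).cast rfl s.1.prop.symm with hf
  -- the inverse map
  have hend : ∀ γ : A, p (F (1, γ)) = b := fun γ => by rw [hFp' 1 γ]; exact γ.target
  set g : A → (Σ e : {e : E // p e = b}, Path e₀ (e : E)) :=
    fun γ => ⟨⟨F (1, γ), hend γ⟩,
      ⟨⟨fun t => F (t, γ), by fun_prop⟩, hF0 γ, rfl⟩⟩ with hg
  have hfapp : ∀ (s : Σ e : {e : E // p e = b}, Path e₀ (e : E)) (t : I01),
      f s t = p (s.2 t) := fun s t => rfl
  -- left inverse
  have hlift_unique : ∀ (e : {e : E // p e = b}) (σ : Path e₀ (e : E)) (t : I01),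
      F (t, f ⟨e, σ⟩) = σ t := by
    intro e σ t
    have := hp.eq_of_comp_eq (A := I01)
      (g₁ := fun t => F (t, f ⟨e, σ⟩)) (g₂ := fun t => σ t)
      (by fun_prop) σ.continuous
      (funext fun t => by
        show p (F (t, f ⟨e, σ⟩)) = p (σ t)
        rw [hFp' t (f ⟨e, σ⟩)]
        rfl)
      0 (by show F (0, f ⟨e, σ⟩) = σ 0; rw [hF0]; exact σ.source.symm)
    exact congrFun this t
  have hleft : ∀ s, g (f s) = s := by
    rintro ⟨e, σ⟩
    apply sigma_eq
    · show F (1, f ⟨e, σ⟩) = (e : E)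
      rw [hlift_unique e σ 1, σ.target]
    · intro t
      exact hlift_unique e σ t
  have hright : ∀ γ, f (g γ) = γ := by
    intro γ
    apply Path.ext
    funext t
    show p (F (t, γ)) = γ t
    exact hFp' t γ
  -- continuity of f
  have hfc : Continuous f := by
    apply continuous_sigma
    intro e
    apply continuous_induced_rng.mpr
    have hkey : (Path.toContinuousMap ∘ fun σ : Path e₀ (e : E) => f ⟨e, σ⟩)
        = fun σ : Path e₀ (e : E) =>
          (⟨p, hp.continuous⟩ : C(E, X)).comp (σ : C(I01, E)) := by
      funext σ
      ext t
      rfl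
    show Continuous (Path.toContinuousMap ∘ fun σ : Path e₀ (e : E) => f ⟨e, σ⟩)
    rw [hkey]
    exact (ContinuousMap.continuous_postcomp _).comp continuous_induced_dom
  -- continuity of g
  have hgc : Continuous g := by
    rw [continuous_iff_continuousAt]
    intro γ₀
    have hdisc : DiscreteTopology (p ⁻¹' {b}) := (hp b).1
    set c : A → (p ⁻¹' {b} : Set E) := fun γ => ⟨F (1, γ), hend γ⟩ with hcdef
    have hcc : Continuous c := by
      apply Continuous.subtype_mk
      fun_prop
    have hO : IsOpen (c ⁻¹' {c γ₀}) := (isOpen_discrete _).preimage hcc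
    have hOmem : γ₀ ∈ c ⁻¹' {c γ₀} := rfl
    have hOeq : ∀ γ ∈ c ⁻¹' {c γ₀}, F (1, γ) = F (1, γ₀) := by
      intro γ hγ
      exact congrArg Subtype.val (hγ : c γ = c γ₀)
    set eP : {e : E // p e = b} := ⟨F (1, γ₀), hend γ₀⟩ with hePdef
    set Φ : A → C(I01, E) := fun γ => ⟨fun t => F (t, γ), by fun_prop⟩ with hΦ
    have hΦc : Continuous Φ := by
      exact ContinuousMap.continuous_of_continuous_uncurry _
        (hFc.comp (continuous_snd.prodMk continuous_fst))
    set ρ : A → Path e₀ (eP : E) := fun γ =>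
      if h : F (1, γ) = F (1, γ₀) then ⟨Φ γ, hF0 γ, h⟩
      else ⟨Φ γ₀, hF0 γ₀, rfl⟩ with hρ
    have hρc : ContinuousAt ρ γ₀ := by
      have hind : IsInducing ((↑) : Path e₀ (eP : E) → C(I01, E)) := ⟨rfl⟩
      rw [hind.continuousAt_iff]
      apply ContinuousAt.congr (hΦc.continuousAt)
      apply eventually_of_mem (hO.mem_nhds hOmem)
      intro γ hγ
      show Φ γ = ((↑) : Path e₀ (eP : E) → C(I01, E)) (ρ γ)
      rw [hρ]
      dsimp only
      rw [dif_pos (hOeq γ hγ)]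
      rfl
    have hev : g =ᶠ[𝓝 γ₀] (fun γ => ⟨eP, ρ γ⟩ : A → Σ e : {e : E // p e = b}, Path e₀ (e : E)) := by
      apply eventually_of_mem (hO.mem_nhds hOmem)
      intro γ hγ
      apply sigma_eq
      · exact hOeq γ hγ
      · intro t
        show F (t, γ) = ρ γ t
        rw [hρ]
        dsimp only
        rw [dif_pos (hOeq γ hγ)]
        rfl
    apply ContinuousAt.congr _ hev.symm
    exact (continuous_sigmaMk.continuousAt).comp hρc
  exact ⟨⟨⟨f, g, hleft, hright⟩, hfc, hgc⟩, fun e σ => rfl⟩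
end

section
/- Let p : E → X be a covering map (IsCoveringMap p) with E simply connected (SimplyConnectedSpace E), let e₀ : E, set a = p e₀, and let b : X. Then there is a bijection between the fiber {e : E // p e = b} and the set Path.Homotopic.Quotient a b of path-homotopy classes of paths in X from a to b, under which an element e of the fiber corresponds to the path-homotopy class of p ∘ σ for any (equivalently, every) path σ : Path e₀ ↑e. -/
open Set Topology Filter

noncomputable section

namespace CoveringLiftAux

open unitInterval

variable {E X : Type*} [TopologicalSpace E] [TopologicalSpace X] {p : E → X}

attribute [local instance] Path.Homotopic.setoid

lemma image_val_Icc (u v : I) : (Subtype.val '' (Set.Icc u v) : Set ℝ) = Set.Icc u.1 v.1 := by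
  ext x
  simp only [Set.mem_image, Set.mem_Icc]
  constructor
  · rintro ⟨y, hy, rfl⟩
    exact ⟨hy.1, hy.2⟩
  · intro h
    exact ⟨⟨x, ⟨u.2.1.trans h.1, h.2.trans v.2.2⟩⟩, ⟨h.1, h.2⟩, rfl⟩

lemma isPreconnected_Icc_I (u v : I) : IsPreconnected (Set.Icc u v : Set I) := by
  rw [← IsInducing.subtypeVal.isPreconnected_image, image_val_Icc]
  exact isPreconnected_Icc

lemma dist_le_of_mem_minmax {c s x : I} (hx : x ∈ Set.Icc (min c s) (max c s)) :
    dist x s ≤ dist c s := by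
  rw [Subtype.dist_eq, Subtype.dist_eq, Real.dist_eq, Real.dist_eq]
  rcases le_total c s with h | h
  · rw [min_eq_left h, max_eq_right h] at hx
    have h1 : (c : ℝ) ≤ x := hx.1
    have h2 : (x : ℝ) ≤ s := hx.2
    rw [abs_of_nonpos (by linarith), abs_of_nonpos (by linarith)]
    linarith
  · rw [min_eq_right h, max_eq_left h] at hx
    have h1 : (s : ℝ) ≤ x := hx.1
    have h2 : (x : ℝ) ≤ c := hx.2
    rw [abs_of_nonneg (by linarith), abs_of_nonneg (by linarith)]
    linarith

/-- The key uniqueness engine: on an interval mapped into the base set of a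
trivialization, a lift must coincide with the canonical section through the
sheet of its value at one point. -/
lemma engine (hp : IsCoveringMap p) {F : Type*} [TopologicalSpace F]
    (T : Bundle.Trivialization F p) (δ : C(I, X)) (Γ : C(I, E))
    (hΓ : ∀ s, p (Γ s) = δ s) {u v : I}
    (hb : ∀ s ∈ Set.Icc u v, δ s ∈ T.baseSet)
    {s₀ : I} (hs₀ : s₀ ∈ Set.Icc u v) :
    Set.EqOn Γ (fun s => T.toOpenPartialHomeomorph.symm (δ s, (T (Γ s₀)).2))
      (Set.Icc u v) := by
  set j := (T (Γ s₀)).2 with hj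
  have hsrc : ∀ s ∈ Set.Icc u v, Γ s ∈ T.source := fun s hs =>
    T.mem_source.mpr (by rw [hΓ]; exact hb s hs)
  have htgt : ∀ s ∈ Set.Icc u v, (δ s, j) ∈ T.target := fun s hs =>
    T.mem_target.mpr (hb s hs)
  have hg : ContinuousOn (fun s : I => T.toOpenPartialHomeomorph.symm (δ s, j))
      (Set.Icc u v) := by
    apply T.toOpenPartialHomeomorph.symm.continuousOn.comp
      ((δ.continuous.prodMk continuous_const).continuousOn)
    intro s hs
    rw [OpenPartialHomeomorph.symm_source]
    exact htgt s hs
  have hagree : Γ s₀ = T.toOpenPartialHomeomorph.symm (δ s₀, j) := by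
    have h1 : (δ s₀, j) = T (Γ s₀) := by
      refine Prod.ext ?_ rfl
      rw [T.coe_fst (hsrc s₀ hs₀), hΓ]
    rw [h1]
    exact (T.toOpenPartialHomeomorph.left_inv (hsrc s₀ hs₀)).symm
  apply hp.eqOn_of_comp_eqOn (isPreconnected_Icc_I u v)
    Γ.continuous.continuousOn hg ?_ hs₀ hagree
  intro s hs
  show p (Γ s) = p (T.toOpenPartialHomeomorph.symm (δ s, j))
  rw [hΓ, T.proj_symm_apply (htgt s hs)]

/-- Extension step for path lifting. -/
lemma ext_lift (hp : IsCoveringMap p) (γ : C(I, X)) (e : E)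
    {t₁ t₂ : I} (h12 : t₁ ≤ t₂) (Γ : C(I, E)) (h0 : Γ 0 = e)
    (hΓ : ∀ s ≤ t₁, p (Γ s) = γ s)
    {F : Type*} [TopologicalSpace F] (T : Bundle.Trivialization F p)
    (hbase : ∀ s, t₁ ≤ s → s ≤ t₂ → γ s ∈ T.baseSet) :
    ∃ Γ' : C(I, E), Γ' 0 = e ∧ ∀ s ≤ t₂, p (Γ' s) = γ s := by
  have hsrc : Γ t₁ ∈ T.source := T.mem_source.mpr (by
    rw [hΓ t₁ le_rfl]; exact hbase t₁ le_rfl h12)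
  set j := (T (Γ t₁)).2 with hj
  -- the clamping map into [t₁, t₂]
  have hmem : ∀ s : I, max t₁ (min s t₂) ∈ Set.Icc t₁ t₂ :=
    fun s => ⟨le_max_left _ _, max_le h12 (min_le_right _ _)⟩
  have hclamp : Continuous fun s : I => max t₁ (min s t₂) := by
    apply Continuous.max continuous_const
    exact Continuous.min continuous_id continuous_const
  have hgc : Continuous fun s : I =>
      T.toOpenPartialHomeomorph.symm (γ (max t₁ (min s t₂)), j) := by
    apply T.toOpenPartialHomeomorph.symm.continuousOn.comp_continuous
      ((γ.continuous.comp hclamp).prodMk continuous_const)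
    intro s
    rw [OpenPartialHomeomorph.symm_source]
    exact T.mem_target.mpr (hbase _ (hmem s).1 (hmem s).2)
  set g : I → E := fun s => T.toOpenPartialHomeomorph.symm (γ (max t₁ (min s t₂)), j)
    with hgdef
  have hbd : Γ t₁ = g t₁ := by
    have h1 : max t₁ (min t₁ t₂) = t₁ := by
      rw [min_eq_left h12, max_self]
    have h2 : (γ t₁, j) = T (Γ t₁) := by
      refine Prod.ext ?_ rfl
      rw [T.coe_fst hsrc, hΓ t₁ le_rfl]
    simp only [hgdef, h1, h2]
    exact (T.toOpenPartialHomeomorph.left_inv hsrc).symm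
  have hcont : Continuous fun s : I => if (s : ℝ) ≤ (t₁ : ℝ) then Γ s else g s := by
    apply Continuous.if_le Γ.continuous hgc continuous_subtype_val continuous_const
    intro s hs
    have : s = t₁ := Subtype.ext hs
    rw [this, hbd]
  refine ⟨⟨_, hcont⟩, ?_, ?_⟩
  · show (if ((0 : I) : ℝ) ≤ (t₁ : ℝ) then Γ 0 else g 0) = e
    have hle0 : ((0 : I) : ℝ) ≤ (t₁ : ℝ) := t₁.2.1
    rw [if_pos hle0, h0]
  · intro s hs2
    show p (if (s : ℝ) ≤ (t₁ : ℝ) then Γ s else g s) = γ s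
    by_cases hs : (s : ℝ) ≤ (t₁ : ℝ)
    · rw [if_pos hs]
      exact hΓ s hs
    · rw [if_neg hs]
      push_neg at hs
      have hst : t₁ ≤ s := le_of_lt hs
      have hcl : max t₁ (min s t₂) = s := by
        rw [min_eq_left hs2, max_eq_right hst]
      show p (T.toOpenPartialHomeomorph.symm (γ (max t₁ (min s t₂)), j)) = γ s
      rw [hcl, T.proj_symm_apply (T.mem_target.mpr (hbase s hst hs2))]

/-- Path lifting: any continuous `γ : C(I, X)` lifts through a covering map,
starting at any point of the fiber over `γ 0`. -/
lemma exists_lift (hp : IsCoveringMap p) (γ : C(I, X)) (e : E) (he : p e = γ 0) :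
    ∃ Γ : C(I, E), Γ 0 = e ∧ ∀ s, p (Γ s) = γ s := by
  set S : Set I := {t | ∃ Γ : C(I, E), Γ 0 = e ∧ ∀ s ≤ t, p (Γ s) = γ s} with hS
  have h0S : (0 : I) ∈ S := by
    refine ⟨ContinuousMap.const I e, rfl, fun s hs => ?_⟩
    have : s = 0 := le_antisymm hs s.2.1
    rw [this]
    exact he
  -- a neighborhood basis fact used for both open and closed
  have key : ∀ t : I, ∃ ε > 0, ∀ t' ∈ S, dist t' t < ε →
      ∀ t'' : I, dist t'' t < ε → t' ≤ t'' → t'' ∈ S := by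
    intro t
    haveI : Nonempty (p ⁻¹' {γ t}) := by
      obtain ⟨Γ, hΓ, -⟩ := hp.exists_path_lifts γ e he.symm
      exact ⟨⟨Γ t, congrFun hΓ t⟩⟩
    set T := (hp (γ t)).toTrivialization with hT
    have hbase : γ t ∈ T.baseSet := (hp (γ t)).mem_toTrivialization_baseSet
    have hnb : γ ⁻¹' T.baseSet ∈ 𝓝 t :=
      γ.continuous.continuousAt (T.open_baseSet.mem_nhds hbase)
    obtain ⟨ε, hε, hball⟩ := Metric.mem_nhds_iff.mp hnb
    refine ⟨ε, hε, fun t' ht' hd' t'' hd'' hle => ?_⟩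
    obtain ⟨Γ, hΓ0, hΓ⟩ := ht'
    refine ext_lift hp γ e hle Γ hΓ0 hΓ T (fun s h1 h2 => hball ?_)
    -- s ∈ [t', t''] so dist s t < ε
    rw [Metric.mem_ball]
    rcases le_total s t with h | h
    · calc dist s t = (t : ℝ) - s := by
            rw [Subtype.dist_eq, Real.dist_eq, abs_of_nonpos (by
              simp only [sub_nonpos, Subtype.coe_le_coe]; exact h)]; ring
        _ ≤ (t : ℝ) - t' := by have := Subtype.coe_le_coe.mpr h1; linarith
        _ ≤ dist t' t := by rw [Subtype.dist_eq, Real.dist_eq, abs_sub_comm]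
                            exact le_abs_self _
        _ < ε := hd'
    · calc dist s t = (s : ℝ) - t := by
            rw [Subtype.dist_eq, Real.dist_eq, abs_of_nonneg (by
              simp only [sub_nonneg, Subtype.coe_le_coe]; exact h)]
        _ ≤ (t'' : ℝ) - t := by have := Subtype.coe_le_coe.mpr h2; linarith
        _ ≤ dist t'' t := by rw [Subtype.dist_eq, Real.dist_eq]; exact le_abs_self _
        _ < ε := hd''
  have hdown : ∀ t ∈ S, ∀ t' ≤ t, t' ∈ S := by
    rintro t ⟨Γ, h1, h2⟩ t' ht'
    exact ⟨Γ, h1, fun s hs => h2 s (hs.trans ht')⟩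
  have hclopen : IsClopen S := by
    constructor
    · -- closed
      rw [← closure_subset_iff_isClosed]
      intro t ht
      obtain ⟨ε, hε, hkey⟩ := key t
      obtain ⟨t', ht'S, ht'⟩ := Metric.mem_closure_iff.mp ht ε hε
      rcases le_total t t' with h | h
      · exact hdown t' ht'S t h
      · exact hkey t' ht'S (by rwa [dist_comm] at ht') t (by simpa using hε) h
    · -- open
      rw [Metric.isOpen_iff]
      intro t ht
      obtain ⟨ε, hε, hkey⟩ := key t
      refine ⟨ε, hε, fun t'' ht'' => ?_⟩
      rcases le_total t'' t with h | h
      · exact hdown t ht t'' h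
      · exact hkey t ht (by simp [hε]) t'' (by rwa [Metric.mem_ball] at ht'') h
  have huniv : S = Set.univ := hclopen.eq_univ ⟨0, h0S⟩
  have h1S : (1 : I) ∈ S := huniv ▸ Set.mem_univ _
  obtain ⟨Γ, h1, h2⟩ := h1S
  exact ⟨Γ, h1, fun s => h2 s le_one'⟩

/-- Continuity (in the parameter) of a family of lifts propagates along the
interval: the key step. -/
lemma continuousAt_step (hp : IsCoveringMap p) (H : C(I × I, X)) (L : I → C(I, E))
    (hL : ∀ t s, p (L t s) = H (t, s)) (t : I) {sa sb : I}
    (hca : ContinuousAt (fun t' => L t' sa) t)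
    {F : Type*} [TopologicalSpace F] [DiscreteTopology F] (T : Bundle.Trivialization F p)
    {U : Set I} (hU : U ∈ 𝓝 t)
    (hbase : ∀ t' ∈ U, ∀ s ∈ Set.Icc (min sa sb) (max sa sb), H (t', s) ∈ T.baseSet) :
    ContinuousAt (fun t' => L t' sb) t := by
  have htU : t ∈ U := mem_of_mem_nhds hU
  have hsa : sa ∈ Set.Icc (min sa sb) (max sa sb) := ⟨min_le_left _ _, le_max_left _ _⟩
  have hsb : sb ∈ Set.Icc (min sa sb) (max sa sb) := ⟨min_le_right _ _, le_max_right _ _⟩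
  have hsrc : L t sa ∈ T.source := T.mem_source.mpr (by
    rw [hL]; exact hbase t htU sa hsa)
  set j := (T (L t sa)).2 with hj
  have hev2 : ∀ᶠ t' in 𝓝 t, (T (L t' sa)).2 = j := by
    have h1 : ContinuousAt (fun t' => T (L t' sa)) t :=
      (T.toOpenPartialHomeomorph.continuousAt hsrc).comp (f := fun t' => L t' sa) hca
    have hcsheet : ContinuousAt (fun t' => (T (L t' sa)).2) t :=
      continuous_snd.continuousAt.comp (f := fun t' => T (L t' sa)) h1
    have hmem : ({j} : Set F) ∈ 𝓝 ((T (L t sa)).2) := by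
      rw [← hj]; exact (isOpen_discrete _).mem_nhds rfl
    filter_upwards [hcsheet hmem] with t' ht' using ht'
  have heq : (fun t' => L t' sb) =ᶠ[𝓝 t]
      fun t' => T.toOpenPartialHomeomorph.symm (H (t', sb), j) := by
    filter_upwards [hU, hev2] with t' ht' hsheet
    have hEq := engine hp T (H.curry t') (L t') (fun s => hL t' s)
      (fun s hs => hbase t' ht' s hs) hsa hsb
    rw [hsheet] at hEq
    exact hEq
  have hGc : ContinuousAt (fun t' => T.toOpenPartialHomeomorph.symm (H (t', sb), j)) t := by
    have hmemT : (H (t, sb), j) ∈ T.toOpenPartialHomeomorph.symm.source := by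
      rw [OpenPartialHomeomorph.symm_source]
      exact T.mem_target.mpr (hbase t htU sb hsb)
    have hpair : ContinuousAt (fun t' : I => (H (t', sb), j)) t :=
      ((H.continuous.comp (continuous_id.prodMk continuous_const)).prodMk
        continuous_const).continuousAt
    exact (T.toOpenPartialHomeomorph.symm.continuousAt hmemT).comp
      (f := fun t' : I => (H (t', sb), j)) hpair
  exact hGc.congr heq.symm

/-- For a family of lifts of a homotopy, all starting at the same point, the
evaluation at any time is continuous in the parameter. -/
lemma continuousAt_all (hp : IsCoveringMap p) (H : C(I × I, X)) (L : I → C(I, E))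
    (hL : ∀ t s, p (L t s) = H (t, s)) (hL0 : ∀ t, L t 0 = L 0 0) (t : I) :
    ∀ s, ContinuousAt (fun t' => L t' s) t := by
  set S : Set I := {s | ContinuousAt (fun t' => L t' s) t} with hSdef
  have h0S : (0 : I) ∈ S := by
    show ContinuousAt (fun t' => L t' 0) t
    have : (fun t' : I => L t' 0) = fun _ => L 0 0 := funext hL0
    rw [this]
    exact continuousAt_const
  -- neighborhood data at each s
  haveI hne : ∀ s, Nonempty (p ⁻¹' {H (t, s)}) := fun s => ⟨⟨L t s, hL t s⟩⟩
  have key : ∀ s : I, ∃ (U : Set I) (ε : ℝ), U ∈ 𝓝 t ∧ 0 < ε ∧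
      ∀ t' ∈ U, ∀ s' : I, dist s' s < ε →
        H (t', s') ∈ ((hp (H (t, s))).toTrivialization).baseSet := by
    intro s
    set T := (hp (H (t, s))).toTrivialization with hT
    have hb : H (t, s) ∈ T.baseSet := (hp (H (t, s))).mem_toTrivialization_baseSet
    have hnb : {z : I × I | H z ∈ T.baseSet} ∈ 𝓝 (t, s) :=
      H.continuous.continuousAt (T.open_baseSet.mem_nhds hb)
    obtain ⟨U, hU, V, hV, hUV⟩ := mem_nhds_prod_iff.mp hnb
    obtain ⟨ε, hε, hball⟩ := Metric.mem_nhds_iff.mp hV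
    exact ⟨U, ε, hU, hε, fun t' ht' s' hd => hUV ⟨ht', hball hd⟩⟩
  have hclopen : IsClopen S := by
    constructor
    · rw [← closure_subset_iff_isClosed]
      intro s hs
      obtain ⟨U, ε, hU, hε, hbase⟩ := key s
      obtain ⟨s', hs'S, hs'⟩ := Metric.mem_closure_iff.mp hs ε hε
      haveI : DiscreteTopology (p ⁻¹' {H (t, s)}) := (hp (H (t, s))).1
      show ContinuousAt (fun t' => L t' s) t
      refine continuousAt_step hp H L hL t (sa := s') (sb := s) hs'S
        ((hp (H (t, s))).toTrivialization) hU (fun t' ht' s'' hs'' => ?_)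
      refine hbase t' ht' s'' (lt_of_le_of_lt (dist_le_of_mem_minmax hs'') ?_)
      rwa [dist_comm] at hs'
    · rw [Metric.isOpen_iff]
      intro s hs
      obtain ⟨U, ε, hU, hε, hbase⟩ := key s
      refine ⟨ε, hε, fun s'' hs'' => ?_⟩
      haveI : DiscreteTopology (p ⁻¹' {H (t, s)}) := (hp (H (t, s))).1
      show ContinuousAt (fun t' => L t' s'') t
      refine continuousAt_step hp H L hL t (sa := s) (sb := s'') hs
        ((hp (H (t, s))).toTrivialization) hU (fun t' ht' s' hs' => ?_)
      rw [min_comm, max_comm] at hs'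
      refine hbase t' ht' s' (lt_of_le_of_lt (dist_le_of_mem_minmax hs') ?_)
      rwa [Metric.mem_ball] at hs''
  have huniv : S = Set.univ := hclopen.eq_univ ⟨0, h0S⟩
  intro s
  have : s ∈ S := huniv ▸ Set.mem_univ s
  exact this

/-- Monodromy: lifts of the two endpoints of a homotopy rel endpoints, starting
at the same point, have the same endpoint. -/
lemma monodromy (hp : IsCoveringMap p) (H : C(I × I, X))
    (h0 : ∀ t, H (t, 0) = H (0, 0)) (h1 : ∀ t, H (t, 1) = H (0, 1))
    (Γ₀ Γ₁ : C(I, E)) (l0 : ∀ s, p (Γ₀ s) = H (0, s)) (l1 : ∀ s, p (Γ₁ s) = H (1, s))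
    (hst : Γ₀ 0 = Γ₁ 0) : Γ₀ 1 = Γ₁ 1 := by
  set e₀ := Γ₀ 0 with he₀
  have hch : ∀ t : I, ∃ Γ : C(I, E), Γ 0 = e₀ ∧ ∀ s, p (Γ s) = H.curry t s := by
    intro t
    apply exists_lift hp (H.curry t) e₀
    show p e₀ = H (t, 0)
    rw [h0 t, he₀, l0 0]
  choose L hL0 hL using hch
  have hLc : ∀ t s, p (L t s) = H (t, s) := hL
  have hL00 : ∀ t, L t 0 = L 0 0 := fun t => (hL0 t).trans (hL0 0).symm
  have hcont : Continuous fun t => L t 1 := continuous_iff_continuousAt.mpr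
    (fun t => continuousAt_all hp H L hLc hL00 t 1)
  haveI : DiscreteTopology (p ⁻¹' {H (0, 1)}) := (hp _).1
  have hmem : ∀ t, L t 1 ∈ p ⁻¹' {H (0, 1)} := fun t => by
    simp only [Set.mem_preimage, Set.mem_singleton_iff, hLc t 1, h1 t]
  have hlc : IsLocallyConstant fun t => (⟨L t 1, hmem t⟩ : p ⁻¹' {H (0, 1)}) :=
    (IsLocallyConstant.iff_continuous _).mpr (hcont.subtype_mk hmem)
  have heq : L 0 1 = L 1 1 :=
    congrArg Subtype.val (hlc.apply_eq_of_preconnectedSpace 0 1)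
  have e0 : ⇑(L 0) = ⇑Γ₀ := hp.eq_of_comp_eq (L 0).continuous Γ₀.continuous
    (funext fun s => (hLc 0 s).trans (l0 s).symm) 0 (hL0 0)
  have e1 : ⇑(L 1) = ⇑Γ₁ := hp.eq_of_comp_eq (L 1).continuous Γ₁.continuous
    (funext fun s => (hLc 1 s).trans (l1 s).symm) 0 ((hL0 1).trans (he₀ ▸ hst))
  calc Γ₀ 1 = L 0 1 := (congrFun e0 1).symm
    _ = L 1 1 := heq
    _ = Γ₁ 1 := congrFun e1 1

end CoveringLiftAux

end

/-- If `p : E → X` is a covering map with `E` simply connected, `e₀ : E` and `b : X`,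
then the fiber of `p` over `b` is in bijection with the set of path-homotopy classes
of paths in `X` from `p e₀` to `b`, an element `e` of the fiber corresponding to the
class of `p ∘ σ` for every path `σ : Path e₀ e`. -/
theorem fiber_equiv_pathHomotopyClasses {E X : Type*} [TopologicalSpace E]
    [TopologicalSpace X] [SimplyConnectedSpace E]
    (p : E → X) (hp : IsCoveringMap p) (e₀ : E) (b : X) :
    ∃ h : {e : E // p e = b} ≃ Path.Homotopic.Quotient (p e₀) b,
      ∀ (e : {e : E // p e = b}) (σ : Path e₀ (e : E)),
        h e = ⟦(σ.map hp.continuous).cast rfl e.prop.symm⟧ := by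
  classical
  -- lifts of paths from `p e₀` to `b`
  have hex : ∀ γ : Path (p e₀) b, ∃ Γ : C(unitInterval, E), Γ 0 = e₀ ∧ ∀ s, p (Γ s) = γ s :=
    fun γ => CoveringLiftAux.exists_lift hp γ.toContinuousMap e₀ (by simp)
  choose Lf hLf0 hLf using hex
  have hfib : ∀ γ : Path (p e₀) b, p (Lf γ 1) = b := fun γ => by
    rw [hLf γ 1, γ.target]
  set f : Path (p e₀) b → {e : E // p e = b} := fun γ => ⟨Lf γ 1, hfib γ⟩ with hf
  have hwd : ∀ γ γ' : Path (p e₀) b, Path.Homotopic γ γ' → f γ = f γ' := by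
    rintro γ γ' ⟨Hom⟩
    apply Subtype.ext
    show Lf γ 1 = Lf γ' 1
    apply CoveringLiftAux.monodromy hp Hom.toContinuousMap
      (fun t => show Hom (t, 0) = Hom (0, 0) by rw [Hom.source t, Hom.source 0])
      (fun t => show Hom (t, 1) = Hom (0, 1) by rw [Hom.target t, Hom.target 0])
      (Lf γ) (Lf γ')
      (fun s => show p (Lf γ s) = Hom (0, s) by
        rw [hLf γ s, Hom.apply_zero s]; rfl)
      (fun s => show p (Lf γ' s) = Hom (1, s) by
        rw [hLf γ' s, Hom.apply_one s]; rfl)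
      ((hLf0 γ).trans (hLf0 γ').symm)
  set invF : Path.Homotopic.Quotient (p e₀) b → {e : E // p e = b} :=
    Quotient.lift f hwd with hinvF
  set toF : {e : E // p e = b} → Path.Homotopic.Quotient (p e₀) b :=
    fun e => ⟦((PathConnectedSpace.somePath e₀ (e : E)).map hp.continuous).cast rfl
      e.prop.symm⟧ with htoF
  have P : ∀ (e : {e : E // p e = b}) (σ : Path e₀ (e : E)),
      toF e = ⟦(σ.map hp.continuous).cast rfl e.prop.symm⟧ := by
    rintro ⟨e, rfl⟩ σ
    apply Quotient.sound
    have h1 : Path.Homotopic ((PathConnectedSpace.somePath e₀ e).map hp.continuous)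
        (σ.map hp.continuous) :=
      Path.Homotopic.map (SimplyConnectedSpace.paths_homotopic _ σ) ⟨p, hp.continuous⟩
    exact h1
  have hli : ∀ e : {e : E // p e = b}, invF (toF e) = e := by
    intro e
    set σ := PathConnectedSpace.somePath e₀ (e : E) with hσ
    set δ : Path (p e₀) b := (σ.map hp.continuous).cast rfl e.prop.symm with hδ
    have h1 : toF e = ⟦δ⟧ := rfl
    rw [h1]
    show f δ = e
    apply Subtype.ext
    show Lf δ 1 = (e : E)
    have hflift : ⇑(Lf δ) = ⇑σ := by
      apply hp.eq_of_comp_eq (Lf δ).continuous σ.continuous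
      · funext s
        show p (Lf δ s) = p (σ s)
        rw [hLf δ s, hδ]
        simp [Path.cast_coe]
      · exact (hLf0 δ).trans σ.source.symm
    rw [congrFun hflift 1, σ.target]
  have hri : ∀ q, toF (invF q) = q := by
    refine fun q => Quotient.inductionOn q fun γ => ?_
    have h0 : invF ⟦γ⟧ = f γ := rfl
    rw [h0]
    set Γp : Path e₀ (Lf γ 1) :=
      { toContinuousMap := Lf γ
        source' := hLf0 γ
        target' := rfl } with hΓp
    rw [P (f γ) Γp]
    have : (Γp.map hp.continuous).cast rfl (hfib γ).symm = γ := by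
      apply Path.ext
      funext s
      show p (Lf γ s) = γ s
      exact hLf γ s
    rw [this]
  exact ⟨⟨toF, invF, hli, hri⟩, P⟩
end
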